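/- arXiv:2307.11239 — 4 statements merged into one kernel-verified Lean document; each statement's English description precedes it below -/
import Mathlib

section
/- If X follows the model vecc(X) ~ N_{np}(vecc(μ), Σ_V ⊗ L⁺) where L is a graph Laplacian with weights w_{ij} and Σ_V has full rank, then the total squared Mahalanobis distance md²(X) := vecc(X−μ)'(Σ_V ⊗ L⁺)⁺ vecc(X−μ) equals (1/2) Σ_{i,j=1}^n (x^μ_i − x^μ_j)' Σ_V^{-1} (x^μ_i − x^μ_j) w_{ij}, where x^μ_i is the i-th row of X − μ. -/
open Matrix
open scoped Kronecker

/-- `B` is the Moore–Penrose pseudo-inverse of `A`. -/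
def IsMoorePenrose {n m : Type*} [Fintype n] [Fintype m]
    (A : Matrix n m ℝ) (B : Matrix m n ℝ) : Prop :=
  A * B * A = A ∧ B * A * B = B ∧ (A * B)ᵀ = A * B ∧ (B * A)ᵀ = B * A

lemma mp_unique {m k : Type*} [Fintype m] [Fintype k]
    (A : Matrix m k ℝ) (B C : Matrix k m ℝ)
    (hB : IsMoorePenrose A B) (hC : IsMoorePenrose A C) : B = C := by
  obtain ⟨b1, b2, b3, b4⟩ := hB
  obtain ⟨c1, c2, c3, c4⟩ := hC
  have hAB : A * B = A * C := by
    calc A * B = (A * C) * (A * B) := by rw [← Matrix.mul_assoc, c1]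
    _ = (A * C)ᵀ * (A * B)ᵀ := by rw [c3, b3]
    _ = Cᵀ * ((A * B * A)ᵀ) := by simp only [transpose_mul, Matrix.mul_assoc]
    _ = Cᵀ * Aᵀ := by rw [b1]
    _ = (A * C)ᵀ := (transpose_mul A C).symm
    _ = A * C := c3
  have hBA : B * A = C * A := by
    calc B * A = (B * A) * (C * A) := by rw [Matrix.mul_assoc, ← Matrix.mul_assoc A C A, c1]
    _ = (B * A)ᵀ * (C * A)ᵀ := by rw [b4, c4]
    _ = ((A * B * A)ᵀ) * Cᵀ := by simp only [transpose_mul, Matrix.mul_assoc]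
    _ = Aᵀ * Cᵀ := by rw [b1]
    _ = (C * A)ᵀ := (transpose_mul C A).symm
    _ = C * A := c4
  calc B = B * A * B := b2.symm
  _ = C * A * B := by rw [hBA]
  _ = C * (A * C) := by rw [Matrix.mul_assoc, hAB]
  _ = C := by rw [← Matrix.mul_assoc, c2]

lemma sum4_reorder {a b : Type*} [Fintype a] [Fintype b] (g : a → b → a → b → ℝ) :
    ∑ k, ∑ i, ∑ l, ∑ j, g k i l j = ∑ i, ∑ j, ∑ k, ∑ l, g k i l j := by
  rw [Finset.sum_comm]
  refine Finset.sum_congr rfl fun i _ => ?_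
  calc ∑ k, ∑ l, ∑ j, g k i l j = ∑ k, ∑ j, ∑ l, g k i l j :=
        Finset.sum_congr rfl fun k _ => Finset.sum_comm
  _ = ∑ j, ∑ k, ∑ l, g k i l j := Finset.sum_comm

/-- under the model `vecc X ~ N(vecc μ, SV ⊗ L⁺)`, the total squared
Mahalanobis distance `vecc(X−μ)ᵀ (SV ⊗ L⁺)⁺ vecc(X−μ)` equals
`(1/2) ∑_{i,j} (x^μ_i − x^μ_j)ᵀ SV⁻¹ (x^μ_i − x^μ_j) w_{ij}`, where `x^μ_i` is the
`i`-th row of `X − μ` (column vectorization: `vecc(X)_{(k,i)} = X_{ik}`). -/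
theorem totalMahalanobis_decomposition {n p : ℕ} (W : Matrix (Fin n) (Fin n) ℝ)
    (hsym : Wᵀ = W) (hnonneg : ∀ i j, i ≠ j → 0 ≤ W i j) (hdiag : ∀ i, W i i = 0)
    (Lplus : Matrix (Fin n) (Fin n) ℝ)
    (hLplus : IsMoorePenrose (Matrix.diagonal (fun i => ∑ j, W i j) - W) Lplus)
    (SV : Matrix (Fin p) (Fin p) ℝ) (hSV : SV.PosDef)
    (Pinv : Matrix (Fin p × Fin n) (Fin p × Fin n) ℝ)
    (hPinv : IsMoorePenrose (SV ⊗ₖ Lplus) Pinv)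
    (X μ : Matrix (Fin n) (Fin p) ℝ) :
    (fun ki : Fin p × Fin n => (X - μ) ki.2 ki.1) ⬝ᵥ
        (Pinv *ᵥ fun ki : Fin p × Fin n => (X - μ) ki.2 ki.1) =
      (1 / 2) * ∑ i, ∑ j,
        ((fun k => (X - μ) i k - (X - μ) j k) ⬝ᵥ
          (SV⁻¹ *ᵥ fun k => (X - μ) i k - (X - μ) j k)) * W i j := by
  set L : Matrix (Fin n) (Fin n) ℝ := Matrix.diagonal (fun i => ∑ j, W i j) - W with hL
  have hunit : IsUnit SV.det := isUnit_iff_ne_zero.2 hSV.det_pos.ne'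
  have h1 : SV * SV⁻¹ = 1 := mul_nonsing_inv SV hunit
  have h2 : SV⁻¹ * SV = 1 := nonsing_inv_mul SV hunit
  obtain ⟨l1, l2, l3, l4⟩ := hLplus
  have hMP2 : IsMoorePenrose (SV ⊗ₖ Lplus) (SV⁻¹ ⊗ₖ L) := by
    refine ⟨?_, ?_, ?_, ?_⟩
    · rw [← mul_kronecker_mul, ← mul_kronecker_mul, h1, Matrix.one_mul, l2]
    · rw [← mul_kronecker_mul, ← mul_kronecker_mul, h2, Matrix.one_mul, l1]
    · rw [← mul_kronecker_mul, h1, ← kroneckerMap_transpose, transpose_one, l4]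
    · rw [← mul_kronecker_mul, h2, ← kroneckerMap_transpose, transpose_one, l3]
  have hP : Pinv = SV⁻¹ ⊗ₖ L := mp_unique _ _ _ hPinv hMP2
  rw [hP]
  set Y : Matrix (Fin n) (Fin p) ℝ := X - μ with hY
  set q : Fin n → Fin n → ℝ := fun i j => ∑ k, Y i k * ∑ l, SV⁻¹ k l * Y j l with hq
  have key : (fun ki : Fin p × Fin n => Y ki.2 ki.1) ⬝ᵥ
      ((SV⁻¹ ⊗ₖ L) *ᵥ fun ki : Fin p × Fin n => Y ki.2 ki.1)
      = ∑ i, ∑ j, L i j * q i j := by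
    simp only [dotProduct, mulVec, kroneckerMap_apply, Fintype.sum_prod_type, hq,
      Finset.mul_sum, Finset.sum_mul]
    rw [sum4_reorder (fun (k : Fin p) (i : Fin n) (l : Fin p) (j : Fin n) =>
      Y i k * (SV⁻¹ k l * L i j * Y j l))]
    exact Finset.sum_congr rfl fun i _ => Finset.sum_congr rfl fun j _ =>
      Finset.sum_congr rfl fun k _ => Finset.sum_congr rfl fun l _ => by ring
  rw [key]
  have hperm : ∀ i j : Fin n, ((fun k => Y i k - Y j k) ⬝ᵥ
      (SV⁻¹ *ᵥ fun k => Y i k - Y j k)) = q i i - q i j - q j i + q j j := by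
    intro i j
    simp only [dotProduct, mulVec, hq, mul_sub, sub_mul, Finset.sum_sub_distrib]
    ring
  simp only [hperm]
  have hW : ∀ i j, W j i = W i j := fun i j => congrFun (congrFun hsym i) j
  have s1 : ∑ i, ∑ j, q j j * W i j = ∑ i, ∑ j, q i i * W i j := by
    rw [Finset.sum_comm]
    exact Finset.sum_congr rfl fun i _ => Finset.sum_congr rfl fun j _ => by rw [hW]
  have s2 : ∑ i, ∑ j, q j i * W i j = ∑ i, ∑ j, q i j * W i j := by
    rw [Finset.sum_comm]
    exact Finset.sum_congr rfl fun i _ => Finset.sum_congr rfl fun j _ => by rw [hW]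
  have lhs_split : ∑ i, ∑ j, L i j * q i j
      = ∑ i, ∑ j, q i i * W i j - ∑ i, ∑ j, q i j * W i j := by
    simp only [hL, Matrix.sub_apply, Matrix.diagonal_apply, sub_mul,
      Finset.sum_sub_distrib, ite_mul, zero_mul]
    simp [Finset.sum_ite_eq, Finset.sum_mul, Finset.mul_sum, mul_comm]
  rw [lhs_split]
  simp only [sub_mul, add_mul, Finset.sum_sub_distrib, Finset.sum_add_distrib, s1, s2]
  ring
end

section
/- In the edgewise MCD C-step, if θ^{t+1} and Σ_V^{t+1} minimize the trimmed objective Σ_{k=1}^h Δ_{π^t(k)}(θ, Σ_V) + (nh/|E|) log|Σ_V| for the fixed ordering π^t (the ordering of Δ_{ij}^t from lowest to highest), and π^{t+1} is the ordering of the updated quantities Δ_{ij}^{t+1}, then the objective evaluated at (θ^{t+1}, Σ_V^{t+1}, π^{t+1}) is at most the objective at (θ^t, Σ_V^t, π^t); consequently the edgewise MCD algorithm converges in finitely many steps. -/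
open Matrix

set_option maxHeartbeats 1000000


lemma prefix_sum_le {N : ℕ} (f : Fin N → ℝ) (σ τ : Equiv.Perm (Fin N))
    (hmono : Monotone fun k => f (σ k)) (h : ℕ) :
    (∑ k : Fin N, if (k : ℕ) < h then f (σ k) else 0) ≤
      ∑ k : Fin N, if (k : ℕ) < h then f (τ k) else 0 := by
  classical
  set T : Finset (Fin N) := Finset.univ.filter (fun k => (k : ℕ) < h) with hTdef
  have hsum : ∀ ρ : Equiv.Perm (Fin N),
      (∑ k : Fin N, if (k : ℕ) < h then f (ρ k) else 0) = ∑ j ∈ T.image ρ, f j := by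
    intro ρ
    rw [Finset.sum_image (fun x _ y _ hxy => ρ.injective hxy), hTdef, Finset.sum_filter]
  rw [hsum σ, hsum τ]
  set A := T.image σ with hA
  set B := T.image τ with hB
  have hcardA : A.card = T.card := Finset.card_image_of_injective _ σ.injective
  have hcardB : B.card = T.card := Finset.card_image_of_injective _ τ.injective
  have hcard : (A \ B).card = (B \ A).card := by
    have h1 := Finset.card_inter_add_card_sdiff A B
    have h2 := Finset.card_inter_add_card_sdiff B A
    rw [Finset.inter_comm] at h2
    omega
  have hAB : ∑ j ∈ A \ B, f j ≤ ∑ j ∈ B \ A, f j := by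
    obtain ⟨e⟩ : Nonempty ((A \ B : Finset (Fin N)) ≃ (B \ A : Finset (Fin N))) :=
      ⟨Finset.equivOfCardEq hcard⟩
    calc ∑ j ∈ A \ B, f j = ∑ x : (A \ B : Finset (Fin N)), f x :=
          (Finset.sum_coe_sort _ _).symm
      _ ≤ ∑ x : (A \ B : Finset (Fin N)), f (e x) := by
          apply Finset.sum_le_sum
          intro x _
          obtain ⟨k, hk, hσk⟩ := Finset.mem_image.mp (Finset.mem_sdiff.mp x.2).1
          have hy : ((e x : Fin N)) ∈ B \ A := (e x).2
          have hyA : ((e x : Fin N)) ∉ A := (Finset.mem_sdiff.mp hy).2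
          have hm : σ.symm (e x : Fin N) ∉ T := by
            intro hmem
            exact hyA (Finset.mem_image.mpr ⟨_, hmem, σ.apply_symm_apply _⟩)
          have hkh : (k : ℕ) < h := by simpa [hTdef] using hk
          have hmh : ¬ ((σ.symm (e x : Fin N) : Fin N) : ℕ) < h := by
            simpa [hTdef] using hm
          have hle : k ≤ σ.symm (e x : Fin N) := Fin.le_def.mpr (by omega)
          calc f (x : Fin N) = f (σ k) := by rw [hσk]
            _ ≤ f (σ (σ.symm (e x : Fin N))) := hmono hle
            _ = f (e x : Fin N) := by rw [σ.apply_symm_apply]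
      _ = ∑ y : (B \ A : Finset (Fin N)), f y := Equiv.sum_comp e (fun y : (B \ A : Finset (Fin N)) => f ↑y)
      _ = ∑ j ∈ B \ A, f j := Finset.sum_coe_sort _ _
  calc ∑ j ∈ A, f j = ∑ j ∈ A ∩ B, f j + ∑ j ∈ A \ B, f j :=
        (Finset.sum_inter_add_sum_sdiff _ _ _).symm
    _ ≤ ∑ j ∈ A ∩ B, f j + ∑ j ∈ B \ A, f j := by linarith
    _ = ∑ j ∈ B ∩ A, f j + ∑ j ∈ B \ A, f j := by rw [Finset.inter_comm]
    _ = ∑ j ∈ B, f j := Finset.sum_inter_add_sum_sdiff _ _ _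


/-- The residual `x^μ_i = x_i − θᵀ z_i` at node `i`. -/
def resid {n p q : ℕ} (X : Matrix (Fin n) (Fin p) ℝ) (Z : Matrix (Fin n) (Fin q) ℝ)
    (θ : Matrix (Fin q) (Fin p) ℝ) (i : Fin n) : Fin p → ℝ :=
  fun k => X i k - ∑ m, Z i m * θ m k

/-- `Δ_{ij}(θ, S) = (x^μ_i − x^μ_j)ᵀ S⁻¹ (x^μ_i − x^μ_j) w_{ij}` for the edge `e`
with endpoints `a e`, `b e` and weight `w e`. -/
noncomputable def edgeDelta {n p q N : ℕ} (X : Matrix (Fin n) (Fin p) ℝ)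
    (Z : Matrix (Fin n) (Fin q) ℝ) (a b : Fin N → Fin n) (w : Fin N → ℝ)
    (θ : Matrix (Fin q) (Fin p) ℝ) (S : Matrix (Fin p) (Fin p) ℝ) (e : Fin N) : ℝ :=
  ((fun k => resid X Z θ (a e) k - resid X Z θ (b e) k) ⬝ᵥ
    (S⁻¹ *ᵥ fun k => resid X Z θ (a e) k - resid X Z θ (b e) k)) * w e

/-- The trimmed objective: sum of the `Δ` values over the first `h` edges of the
ordering `π` plus `(n h / |E|) log det S`. -/
noncomputable def trimObj {n p q N : ℕ} (h : ℕ) (X : Matrix (Fin n) (Fin p) ℝ)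
    (Z : Matrix (Fin n) (Fin q) ℝ) (a b : Fin N → Fin n) (w : Fin N → ℝ)
    (θ : Matrix (Fin q) (Fin p) ℝ) (S : Matrix (Fin p) (Fin p) ℝ)
    (π : Equiv.Perm (Fin N)) : ℝ :=
  (∑ k : Fin N, if (k : ℕ) < h then edgeDelta X Z a b w θ S (π k) else 0) +
    ((n : ℝ) * h / N) * Real.log S.det

/-- in the edgewise MCD C-step, if `(θ^{t+1}, S^{t+1})` minimizes the
trimmed objective for the fixed ordering `π^t` (which sorts `Δ^t` increasingly), and
`π^{t+1}` sorts the updated `Δ^{t+1}`, then the objective at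
`(θ^{t+1}, S^{t+1}, π^{t+1})` is at most the objective at `(θ^t, S^t, π^t)`;
consequently the algorithm converges in finitely many steps (the objective sequence
is eventually constant). -/
theorem edgewise_mcd_decreases_and_converges {n p q N : ℕ} (h : ℕ)
    (hh1 : N + p + 1 ≤ 2 * h) (hh2 : h ≤ N)
    (X : Matrix (Fin n) (Fin p) ℝ) (Z : Matrix (Fin n) (Fin q) ℝ)
    (a b : Fin N → Fin n) (w : Fin N → ℝ) (hwpos : ∀ e, 0 < w e)
    (θs : ℕ → Matrix (Fin q) (Fin p) ℝ) (Ss : ℕ → Matrix (Fin p) (Fin p) ℝ)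
    (πs : ℕ → Equiv.Perm (Fin N))
    (hpos : ∀ t, (Ss t).PosDef)
    (hsort : ∀ t, Monotone fun k : Fin N => edgeDelta X Z a b w (θs t) (Ss t) (πs t k))
    (hmin : ∀ t, ∀ (θ' : Matrix (Fin q) (Fin p) ℝ) (S' : Matrix (Fin p) (Fin p) ℝ),
      S'.PosDef →
        trimObj h X Z a b w (θs (t + 1)) (Ss (t + 1)) (πs t) ≤
          trimObj h X Z a b w θ' S' (πs t)) :
    (∀ t, trimObj h X Z a b w (θs (t + 1)) (Ss (t + 1)) (πs (t + 1)) ≤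
        trimObj h X Z a b w (θs t) (Ss t) (πs t)) ∧
      ∃ T, ∀ t, T ≤ t →
        trimObj h X Z a b w (θs t) (Ss t) (πs t) =
          trimObj h X Z a b w (θs T) (Ss T) (πs T) := by
  classical
  set F := fun t => trimObj h X Z a b w (θs t) (Ss t) (πs t) with hF
  set G := fun t => trimObj h X Z a b w (θs (t + 1)) (Ss (t + 1)) (πs t) with hG
  have hfg : ∀ t, F (t + 1) ≤ G t := by
    intro t
    have := prefix_sum_le (edgeDelta X Z a b w (θs (t + 1)) (Ss (t + 1)))
      (πs (t + 1)) (πs t) (hsort (t + 1)) h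
    simp only [hF, hG, trimObj]
    linarith
  have hgf : ∀ t, G t ≤ F t := fun t => hmin t (θs t) (Ss t) (hpos t)
  have hgnext : ∀ t, G (t + 1) ≤ F (t + 1) := fun t => hmin (t + 1) _ _ (hpos (t + 1))
  have hdec : ∀ t, F (t + 1) ≤ F t := fun t => (hfg t).trans (hgf t)
  refine ⟨hdec, ?_⟩
  have hganti : Antitone G := antitone_nat_of_succ_le fun t => (hgnext t).trans (hfg t)
  have heqpi : ∀ s t, πs s = πs t → G s = G t := by
    intro s t hst
    have h1 : G s ≤ G t := by
      have := hmin s (θs (t + 1)) (Ss (t + 1)) (hpos (t + 1))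
      simpa [hG, hst] using this
    have h2 : G t ≤ G s := by
      have := hmin t (θs (s + 1)) (Ss (s + 1)) (hpos (s + 1))
      simpa [hG, hst] using this
    linarith
  obtain ⟨π₀, hπ₀⟩ := Finite.exists_infinite_fiber πs
  have hinf : (πs ⁻¹' {π₀}).Infinite := Set.infinite_coe_iff.mp hπ₀
  obtain ⟨s₀, hs₀⟩ := hinf.nonempty
  have hgconst : ∀ t, s₀ ≤ t → G t = G s₀ := by
    intro t ht
    obtain ⟨t₂, ht₂mem, ht₂⟩ := hinf.exists_gt t
    have h1 : G t ≤ G s₀ := hganti ht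
    have h2 : G s₀ = G t₂ := heqpi s₀ t₂ (by
      have hb : πs t₂ = π₀ := ht₂mem
      have ha : πs s₀ = π₀ := hs₀
      rw [ha, hb])
    have h3 : G t₂ ≤ G t := hganti (le_of_lt ht₂)
    linarith
  have key : ∀ u, s₀ ≤ u → F (u + 1) = G s₀ := by
    intro u hu
    have h1 := hfg u
    have h2 := hgnext u
    rw [hgconst u hu] at h1
    rw [hgconst (u + 1) (by omega)] at h2
    linarith
  refine ⟨s₀ + 1, ?_⟩
  intro t ht
  obtain ⟨u, rfl⟩ : ∃ u, t = u + 1 := ⟨t - 1, by omega⟩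
  show F (u + 1) = F (s₀ + 1)
  rw [key u (by omega), key s₀ le_rfl]
end

section
/- The p-part simplex S^p with perturbation x ⊕ y = (x_1y_1,…,x_py_p)/Σ_i x_iy_i, powering α ⊙ x = (x_1^α,…,x_p^α)/Σ_i x_i^α, and the Aitchison inner product ⟨x,y⟩_A = (1/(2p)) Σ_{k,l=1}^p ln(x_k/x_l)ln(y_k/y_l) forms a real inner product space of dimension p−1. -/
/-!
The centred log-ratio transform `clr x = (log x_k - (1/p) ∑_i log x_i)_k` maps the open simplex
bijectively onto the hyperplane of zero-sum vectors of `ℝ^p`, with inverse the normalised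
exponential `v ↦ exp v / ∑_i exp v_i`. Logarithms turn products into sums and powers into
multiples, while a normalising constant shifts every logarithm by the same amount, which the
centring removes; so perturbation and powering become addition and scalar multiplication.
Since `ln (x_k / x_l) = clr x k - clr x l`, expanding the double sum shows that `⟨x, y⟩_A` is the
Euclidean inner product of `clr x` and `clr y`. The hyperplane is the orthogonal complement of the
constant vector, so it has dimension `p - 1` and is isometric to `ℝ^(p-1)`.
-/

open scoped RealInnerProductSpace

/-- The open `p`-part simplex of strictly positive compositions summing to 1. -/
def simplexSet (p : ℕ) : Set (Fin p → ℝ) :=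
  {x | (∀ k, 0 < x k) ∧ ∑ k, x k = 1}

/-- Aitchison perturbation `x ⊕ y`. -/
noncomputable def pert {p : ℕ} (x y : Fin p → ℝ) : Fin p → ℝ :=
  fun k => x k * y k / ∑ i, x i * y i

/-- Aitchison powering `α ⊙ x`. -/
noncomputable def apow {p : ℕ} (α : ℝ) (x : Fin p → ℝ) : Fin p → ℝ :=
  fun k => x k ^ α / ∑ i, x i ^ α

/-- The Aitchison inner product `⟨x, y⟩_A = (1/(2p)) ∑_{k,l} ln(x_k/x_l) ln(y_k/y_l)`. -/
noncomputable def aInner {p : ℕ} (x y : Fin p → ℝ) : ℝ :=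
  (1 / (2 * (p : ℝ))) * ∑ k, ∑ l, Real.log (x k / x l) * Real.log (y k / y l)

open Finset Module

section Clr

variable {ι : Type*} [Fintype ι]

noncomputable def clr (x : ι → ℝ) : EuclideanSpace ℝ ι :=
  WithLp.toLp 2 fun k => Real.log (x k) - (∑ i, Real.log (x i)) / Fintype.card ι

lemma clr_apply (x : ι → ℝ) (k : ι) :
    clr x k = Real.log (x k) - (∑ i, Real.log (x i)) / Fintype.card ι :=
  rfl

lemma sum_clr (x : ι → ℝ) : ∑ k, clr x k = 0 := by
  simp only [clr_apply, sum_sub_distrib, sum_const, card_univ, nsmul_eq_mul]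
  rcases eq_or_ne (Fintype.card ι : ℝ) 0 with h | h
  · simp [Fintype.card_eq_zero_iff.mp (by exact_mod_cast h)]
  · field_simp
    ring

lemma clr_sub_clr {x : ι → ℝ} (hx : ∀ k, x k ≠ 0) (k l : ι) :
    clr x k - clr x l = Real.log (x k / x l) := by
  rw [clr_apply, clr_apply, Real.log_div (hx k) (hx l)]
  ring

lemma clr_div_const {w : ι → ℝ} (hw : ∀ k, w k ≠ 0) {c : ℝ} (hc : c ≠ 0) :
    clr (fun k => w k / c) = clr w := by
  ext k
  have hcard : (Fintype.card ι : ℝ) ≠ 0 := by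
    have : Nonempty ι := ⟨k⟩
    exact_mod_cast Fintype.card_ne_zero
  simp only [clr_apply, Real.log_div (hw _) hc, sum_sub_distrib, sum_const, card_univ,
    nsmul_eq_mul]
  field_simp
  ring

lemma clr_mul {x y : ι → ℝ} (hx : ∀ k, x k ≠ 0) (hy : ∀ k, y k ≠ 0) :
    clr (fun k => x k * y k) = clr x + clr y := by
  ext k
  simp only [clr_apply, Real.log_mul (hx _) (hy _), sum_add_distrib, PiLp.add_apply]
  ring

lemma clr_rpow {x : ι → ℝ} (hx : ∀ k, 0 < x k) (α : ℝ) :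
    clr (fun k => x k ^ α) = α • clr x := by
  ext k
  simp only [clr_apply, Real.log_rpow (hx _), ← mul_sum, PiLp.smul_apply, smul_eq_mul]
  ring

lemma sum_sum_sub_mul_sub (a b : ι → ℝ) :
    ∑ k, ∑ l, (a k - a l) * (b k - b l) =
      2 * (Fintype.card ι * ∑ k, a k * b k - (∑ k, a k) * ∑ k, b k) := by
  have hexpand : ∀ k l, (a k - a l) * (b k - b l) =
      a k * b k + a l * b l - a k * b l - a l * b k := fun k l => by ring
  simp only [hexpand, sum_add_distrib, sum_sub_distrib, sum_const, card_univ, nsmul_eq_mul,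
    ← mul_sum, ← sum_mul]
  ring

noncomputable def clrInv (v : EuclideanSpace ℝ ι) : ι → ℝ :=
  fun k => Real.exp (v k) / ∑ i, Real.exp (v i)

lemma clr_clrInv [Nonempty ι] {v : EuclideanSpace ℝ ι}
    (hv : ∑ k, v k = 0) : clr (clrInv v) = v := by
  have hs : (∑ i, Real.exp (v i)) ≠ 0 := (sum_pos (fun i _ => Real.exp_pos _) univ_nonempty).ne'
  unfold clrInv
  rw [clr_div_const (fun k => (Real.exp_pos _).ne') hs]
  ext k
  simp [clr_apply, hv]

end Clr

section ZeroSum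

variable (ι : Type*) [Fintype ι]

noncomputable def zeroSumSubspace : Submodule ℝ (EuclideanSpace ℝ ι) :=
  (ℝ ∙ WithLp.toLp 2 fun _ => 1)ᗮ

variable {ι}

lemma mem_zeroSumSubspace {v : EuclideanSpace ℝ ι} :
    v ∈ zeroSumSubspace ι ↔ ∑ k, v k = 0 := by
  simp [zeroSumSubspace, Submodule.mem_orthogonal_singleton_iff_inner_right, PiLp.inner_apply]

lemma finrank_zeroSumSubspace [Nonempty ι] :
    finrank ℝ (zeroSumSubspace ι) = Fintype.card ι - 1 := by
  have hone : (WithLp.toLp 2 fun _ : ι => (1 : ℝ)) ≠ 0 := by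
    intro h
    simpa using congrArg (fun v : EuclideanSpace ℝ ι => v (Classical.arbitrary ι)) h
  have hsum := Submodule.finrank_add_finrank_orthogonal (ℝ ∙ WithLp.toLp 2 fun _ : ι => (1 : ℝ))
  rw [finrank_span_singleton hone, finrank_euclideanSpace] at hsum
  rw [zeroSumSubspace]
  exact Nat.eq_sub_of_add_eq' hsum

lemma clr_mem_zeroSumSubspace (x : ι → ℝ) : clr x ∈ zeroSumSubspace ι :=
  mem_zeroSumSubspace.mpr (sum_clr x)

end ZeroSum

section Simplex

variable {p : ℕ}

lemma clrInv_clr {x : Fin p → ℝ} (hx : x ∈ simplexSet p) : clrInv (clr x) = x := by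
  obtain ⟨hpos, hsum⟩ := hx
  set m := (∑ i, Real.log (x i)) / p
  have hexp : ∀ k, Real.exp (clr x k) = x k * Real.exp (-m) := fun k => by
    rw [clr_apply, Fintype.card_fin, sub_eq_add_neg, Real.exp_add, Real.exp_log (hpos k)]
  ext k
  simp only [clrInv, hexp, ← sum_mul, hsum, one_mul]
  field_simp

variable [NeZero p]

lemma clrInv_mem_simplexSet (v : EuclideanSpace ℝ (Fin p)) : clrInv v ∈ simplexSet p := by
  have hs : 0 < ∑ i, Real.exp (v i) := sum_pos (fun i _ => Real.exp_pos _) univ_nonempty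
  refine ⟨fun k => div_pos (Real.exp_pos _) hs, ?_⟩
  simp only [clrInv, ← sum_div, div_self hs.ne']

lemma clr_pert {x y : Fin p → ℝ} (hx : ∀ k, 0 < x k) (hy : ∀ k, 0 < y k) :
    clr (pert x y) = clr x + clr y := by
  have hs : 0 < ∑ i, x i * y i := sum_pos (fun i _ => mul_pos (hx i) (hy i)) univ_nonempty
  unfold pert
  rw [clr_div_const (fun k => (mul_pos (hx k) (hy k)).ne') hs.ne',
    clr_mul (fun k => (hx k).ne') (fun k => (hy k).ne')]

lemma clr_apow {x : Fin p → ℝ} (hx : ∀ k, 0 < x k) (α : ℝ) :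
    clr (apow α x) = α • clr x := by
  have hs : 0 < ∑ i, x i ^ α := sum_pos (fun i _ => Real.rpow_pos_of_pos (hx i) α) univ_nonempty
  unfold apow
  rw [clr_div_const (fun k => (Real.rpow_pos_of_pos (hx k) α).ne') hs.ne', clr_rpow hx]

lemma aInner_eq_inner_clr {x y : Fin p → ℝ} (hx : ∀ k, 0 < x k) (hy : ∀ k, 0 < y k) :
    aInner x y = ⟪clr x, clr y⟫ := by
  have hp : (p : ℝ) ≠ 0 := NeZero.ne _
  simp only [aInner, ← clr_sub_clr (fun k => (hx k).ne'), ← clr_sub_clr (fun k => (hy k).ne'),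
    sum_sum_sub_mul_sub, sum_clr, Fintype.card_fin, PiLp.inner_apply, Real.inner_apply,
    mul_zero, sub_zero]
  field_simp

noncomputable def clrEquiv : {x : Fin p → ℝ // x ∈ simplexSet p} ≃ zeroSumSubspace (Fin p) where
  toFun x := ⟨clr x, clr_mem_zeroSumSubspace (x : Fin p → ℝ)⟩
  invFun v := ⟨clrInv v, clrInv_mem_simplexSet (v : EuclideanSpace ℝ (Fin p))⟩
  left_inv x := Subtype.ext (clrInv_clr x.2)
  right_inv v := Subtype.ext (clr_clrInv (mem_zeroSumSubspace.mp v.2))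

lemma coe_clrEquiv (x : {x : Fin p → ℝ // x ∈ simplexSet p}) :
    (clrEquiv x : EuclideanSpace ℝ (Fin p)) = clr x :=
  rfl

end Simplex

/-- the simplex `S^p` with perturbation, powering and the Aitchison
inner product forms a real inner product space of dimension `p − 1`: there is a
bijection onto the `(p−1)`-dimensional Euclidean space turning perturbation into
addition, powering into scalar multiplication, and `⟨·,·⟩_A` into the Euclidean
inner product. -/
theorem simplex_aitchison_innerProductSpace (p : ℕ) (hp : 0 < p) :
    ∃ e : {x : Fin p → ℝ // x ∈ simplexSet p} ≃ EuclideanSpace ℝ (Fin (p - 1)),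
      (∀ x y z : {x : Fin p → ℝ // x ∈ simplexSet p},
          (z : Fin p → ℝ) = pert (x : Fin p → ℝ) (y : Fin p → ℝ) → e z = e x + e y) ∧
      (∀ (α : ℝ) (x z : {x : Fin p → ℝ // x ∈ simplexSet p}),
          (z : Fin p → ℝ) = apow α (x : Fin p → ℝ) → e z = α • e x) ∧
      (∀ x y : {x : Fin p → ℝ // x ∈ simplexSet p},
          aInner (x : Fin p → ℝ) (y : Fin p → ℝ) = ⟪e x, e y⟫) := by
  have : NeZero p := ⟨hp.ne'⟩
  have hdim : finrank ℝ (zeroSumSubspace (Fin p)) = p - 1 := by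
    rw [finrank_zeroSumSubspace, Fintype.card_fin]
  let φ := ((stdOrthonormalBasis ℝ (zeroSumSubspace (Fin p))).reindex (finCongr hdim)).repr
  refine ⟨clrEquiv.trans φ.toEquiv, ?_, ?_, ?_⟩
  · intro x y z hz
    have hclr : clrEquiv z = clrEquiv x + clrEquiv y := by
      ext1
      simp only [coe_clrEquiv, Submodule.coe_add, hz, clr_pert x.2.1 y.2.1]
    simp [hclr]
  · intro α x z hz
    have hclr : clrEquiv z = α • clrEquiv x := by
      ext1
      simp only [coe_clrEquiv, Submodule.coe_smul, hz, clr_apow x.2.1]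
    simp [hclr]
  · intro x y
    simp [LinearIsometryEquiv.inner_map_map, coe_clrEquiv, aInner_eq_inner_clr x.2.1 y.2.1]
end

section
/- Let vecc(X) ~ N_{np}(vecc(μ), Σ_V ⊗ L⁺) with Σ_V positive definite and L a graph Laplacian with pseudo-inverse L⁺. Then the density of vecc(X) restricted to the support of the distribution is proportional to exp(−(1/4) Σ_{i,j=1}^n (x^μ_i − x^μ_j)'Σ_V^{-1}(x^μ_i − x^μ_j) w_{ij}), i.e. the exponent of the (degenerate) Gaussian density equals −(1/2)·md²(X) with md²(X) = (1/2)Σ_{i,j}(x^μ_i − x^μ_j)'Σ_V^{-1}(x^μ_i − x^μ_j)w_{ij}. -/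
/-!
The Moore–Penrose inverse is unique and commutes with Kronecker products, and `L` is the
Moore–Penrose inverse of `L⁺`; hence `(Σ_V ⊗ L⁺)⁺ = Σ_V⁻¹ ⊗ L`, and the quadratic form of
`vecc(X − μ)` becomes `∑_{i,j} L_{ij} Q_{ij}` with `Q_{ij} = x^μ_iᵀ Σ_V⁻¹ x^μ_j`. For a
symmetric weight matrix this Laplacian form equals `∑_{i,j} (Q_{ii} − Q_{ij}) w_{ij}`, and
symmetrizing in `i, j` gives half the edgewise sum
`∑_{i,j} (x^μ_i − x^μ_j)ᵀ Σ_V⁻¹ (x^μ_i − x^μ_j) w_{ij}`.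
-/

open Matrix
open scoped Kronecker

namespace IsMoorePenrose

variable {m n : Type*} [Fintype m] [Fintype n] {A : Matrix m n ℝ} {B C : Matrix n m ℝ}

theorem symm (h : IsMoorePenrose A B) : IsMoorePenrose B A :=
  ⟨h.2.1, h.1, h.2.2.2, h.2.2.1⟩

theorem transpose (h : IsMoorePenrose A B) : IsMoorePenrose Aᵀ Bᵀ := by
  obtain ⟨h₁, h₂, h₃, h₄⟩ := h
  refine ⟨?_, ?_, ?_, ?_⟩
  · simpa only [transpose_mul, Matrix.mul_assoc] using congrArg Matrix.transpose h₁
  · simpa only [transpose_mul, Matrix.mul_assoc] using congrArg Matrix.transpose h₂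
  · simp only [← transpose_mul, h₄]
  · simp only [← transpose_mul, h₃]

theorem mul_eq_mul (hB : IsMoorePenrose A B) (hC : IsMoorePenrose A C) : A * B = A * C :=
  calc A * B = (A * C) * (A * B) := by rw [← Matrix.mul_assoc, hC.1]
    _ = ((A * B) * (A * C))ᵀ := by rw [transpose_mul, hB.2.2.1, hC.2.2.1]
    _ = A * C := by rw [← Matrix.mul_assoc, hB.1, hC.2.2.1]

theorem unique (hB : IsMoorePenrose A B) (hC : IsMoorePenrose A C) : B = C := by
  have hBA : B * A = C * A := by
    simpa only [← transpose_mul, transpose_inj] using hB.transpose.mul_eq_mul hC.transpose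
  calc B = B * A * B := hB.2.1.symm
    _ = C * A * C := by rw [hBA, Matrix.mul_assoc, hB.mul_eq_mul hC, ← Matrix.mul_assoc]
    _ = C := hC.2.1

theorem kronecker {m' n' : Type*} [Fintype m'] [Fintype n'] {A' : Matrix m' n' ℝ}
    {B' : Matrix n' m' ℝ} (h : IsMoorePenrose A B) (h' : IsMoorePenrose A' B') :
    IsMoorePenrose (A ⊗ₖ A') (B ⊗ₖ B') := by
  obtain ⟨h₁, h₂, h₃, h₄⟩ := h
  obtain ⟨h₁', h₂', h₃', h₄'⟩ := h'
  refine ⟨?_, ?_, ?_, ?_⟩ <;>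
    simp only [← mul_kronecker_mul, ← kroneckerMap_transpose, h₁, h₂, h₃, h₄, h₁', h₂', h₃', h₄']

end IsMoorePenrose

theorem isMoorePenrose_nonsing_inv {n : Type*} [Fintype n] [DecidableEq n] {A : Matrix n n ℝ}
    (h : IsUnit A.det) : IsMoorePenrose A A⁻¹ := by
  refine ⟨?_, ?_, ?_, ?_⟩ <;>
    simp only [mul_nonsing_inv _ h, nonsing_inv_mul _ h, Matrix.one_mul, transpose_one]

theorem vec_dotProduct_kronecker_mulVec_vec {R n p : Type*} [CommSemiring R] [Fintype n]
    [Fintype p] (A : Matrix p p R) (B : Matrix n n R) (Y Z : Matrix n p R) :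
    vec Y ⬝ᵥ ((A ⊗ₖ B) *ᵥ vec Z) = ∑ i, ∑ j, B i j * (Y i ⬝ᵥ (A *ᵥ Z j)) := by
  rw [kronecker_mulVec_vec, vec_dotProduct_vec]
  simp only [trace, diag, mul_apply, transpose_apply, dotProduct, mulVec, Finset.mul_sum,
    Finset.sum_mul]
  rw [Finset.sum_comm]
  refine Finset.sum_congr rfl fun i _ => ?_
  rw [Finset.sum_comm_cycle]
  ac_rfl

theorem sub_dotProduct_mulVec_sub {R n : Type*} [CommRing R] [Fintype n] (A : Matrix n n R)
    (x y : n → R) :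
    (x - y) ⬝ᵥ (A *ᵥ (x - y)) =
      x ⬝ᵥ (A *ᵥ x) - x ⬝ᵥ (A *ᵥ y) - y ⬝ᵥ (A *ᵥ x) + y ⬝ᵥ (A *ᵥ y) := by
  simp only [mulVec_sub, sub_dotProduct, dotProduct_sub]
  abel

section Laplacian

variable {R n : Type*} [CommRing R] [Fintype n] [DecidableEq n]

def weightedLaplacian (W : Matrix n n R) : Matrix n n R :=
  diagonal (fun i => ∑ j, W i j) - W

theorem sum_weightedLaplacian_mul (W : Matrix n n R) (Q : n → n → R) :
    ∑ i, ∑ j, weightedLaplacian W i j * Q i j = ∑ i, ∑ j, (Q i i - Q i j) * W i j := by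
  simp only [weightedLaplacian, Matrix.sub_apply, diagonal_apply, sub_mul, ite_mul, zero_mul,
    Finset.sum_sub_distrib, Finset.sum_ite_eq, Finset.mem_univ, if_true, Finset.sum_mul]
  simp only [mul_comm]

theorem two_mul_sum_weightedLaplacian_mul {W : Matrix n n R} (hW : Wᵀ = W) (Q : n → n → R) :
    2 * ∑ i, ∑ j, weightedLaplacian W i j * Q i j =
      ∑ i, ∑ j, (Q i i - Q i j - Q j i + Q j j) * W i j := by
  have hswap : ∑ i, ∑ j, (Q j j - Q j i) * W i j = ∑ i, ∑ j, (Q i i - Q i j) * W i j := by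
    rw [Finset.sum_comm]
    exact Finset.sum_congr rfl fun i _ => Finset.sum_congr rfl fun j _ => by
      rw [← transpose_apply W, hW]
  rw [sum_weightedLaplacian_mul, two_mul]
  nth_rw 2 [← hswap]
  simp only [← Finset.sum_add_distrib, ← add_mul]
  exact Finset.sum_congr rfl fun i _ => Finset.sum_congr rfl fun j _ => by ring

end Laplacian

theorem density_exponent_edgewise_form_general {n p : ℕ} (W : Matrix (Fin n) (Fin n) ℝ)
    (hsym : Wᵀ = W)
    (Lplus : Matrix (Fin n) (Fin n) ℝ)
    (hLplus : IsMoorePenrose (Matrix.diagonal (fun i => ∑ j, W i j) - W) Lplus)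
    (SV : Matrix (Fin p) (Fin p) ℝ) (hSV : SV.PosDef)
    (Pinv : Matrix (Fin p × Fin n) (Fin p × Fin n) ℝ)
    (hPinv : IsMoorePenrose (SV ⊗ₖ Lplus) Pinv)
    (X μ : Matrix (Fin n) (Fin p) ℝ) :
    -(1 / 2) * ((fun ki : Fin p × Fin n => (X - μ) ki.2 ki.1) ⬝ᵥ
        (Pinv *ᵥ fun ki : Fin p × Fin n => (X - μ) ki.2 ki.1)) =
      -(1 / 4) * ∑ i, ∑ j,
        ((fun k => (X - μ) i k - (X - μ) j k) ⬝ᵥ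
          (SV⁻¹ *ᵥ fun k => (X - μ) i k - (X - μ) j k)) * W i j := by
  have hPinv_eq : Pinv = SV⁻¹ ⊗ₖ weightedLaplacian W :=
    hPinv.unique ((isMoorePenrose_nonsing_inv hSV.det_pos.ne'.isUnit).kronecker hLplus.symm)
  set Y := X - μ
  calc -(1 / 2) * (vec Y ⬝ᵥ (Pinv *ᵥ vec Y))
      = -(1 / 4) * (2 * ∑ i, ∑ j, weightedLaplacian W i j * (Y i ⬝ᵥ (SV⁻¹ *ᵥ Y j))) := by
        rw [hPinv_eq, vec_dotProduct_kronecker_mulVec_vec]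
        ring
    _ = -(1 / 4) * ∑ i, ∑ j, ((Y i - Y j) ⬝ᵥ (SV⁻¹ *ᵥ (Y i - Y j))) * W i j := by
        simp only [two_mul_sum_weightedLaplacian_mul hsym, sub_dotProduct_mulVec_sub]

/-- for the (degenerate) Gaussian model `vecc X ~ N(vecc μ, SV ⊗ L⁺)`,
the exponent of the density, `−(1/2)·md²(X)` with
`md²(X) = vecc(X−μ)ᵀ (SV ⊗ L⁺)⁺ vecc(X−μ)`, equals
`−(1/4) ∑_{i,j} (x^μ_i − x^μ_j)ᵀ SV⁻¹ (x^μ_i − x^μ_j) w_{ij}`, so the density on the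
support is proportional to `exp(−(1/4) ∑_{i,j} (x^μ_i − x^μ_j)ᵀ SV⁻¹ (x^μ_i − x^μ_j) w_{ij})`
(column vectorization: `vecc(X)_{(k,i)} = X_{ik}`). -/
theorem density_exponent_edgewise_form {n p : ℕ} (W : Matrix (Fin n) (Fin n) ℝ)
    (hsym : Wᵀ = W) (hnonneg : ∀ i j, i ≠ j → 0 ≤ W i j) (hdiag : ∀ i, W i i = 0)
    (Lplus : Matrix (Fin n) (Fin n) ℝ)
    (hLplus : IsMoorePenrose (Matrix.diagonal (fun i => ∑ j, W i j) - W) Lplus)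
    (SV : Matrix (Fin p) (Fin p) ℝ) (hSV : SV.PosDef)
    (Pinv : Matrix (Fin p × Fin n) (Fin p × Fin n) ℝ)
    (hPinv : IsMoorePenrose (SV ⊗ₖ Lplus) Pinv)
    (X μ : Matrix (Fin n) (Fin p) ℝ) :
    -(1 / 2) * ((fun ki : Fin p × Fin n => (X - μ) ki.2 ki.1) ⬝ᵥ
        (Pinv *ᵥ fun ki : Fin p × Fin n => (X - μ) ki.2 ki.1)) =
      -(1 / 4) * ∑ i, ∑ j,
        ((fun k => (X - μ) i k - (X - μ) j k) ⬝ᵥ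
          (SV⁻¹ *ᵥ fun k => (X - μ) i k - (X - μ) j k)) * W i j :=
  density_exponent_edgewise_form_general W hsym Lplus hLplus SV hSV Pinv hPinv X μ
end
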